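/- Lower bound for the ground state energy (Theorem 3.1): for all k > max{|r_min|,|r_max|}/2, λ_0(V_k, α) ≥ (1/2 - a_{k,1}) λ_0(V_{k+r_min}, ∞δ_0) + (1/2 - a_{k,2}) λ_0(V_{k-r_max}, ∞δ_0), where a_{k,1} = 1/2 - Σ_{j=-k}^{r_min} |φ_k(j) - φ_k(r_min)|² and a_{k,2} = 1/2 - Σ_{j=r_max}^{k} |φ_k(j) - φ_k(r_max)|². -/

import Mathlib

open Finset Filter Topology Matrix

/-- The (Neumann) discrete Laplacian matrix of the path graph with `n` vertices. -/
noncomputable def pathLap (n : ℕ) : Matrix (Fin n) (Fin n) ℝ :=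
  Matrix.of fun i j =>
    if i = j then (if i.val = 0 ∨ i.val = n - 1 then (1 : ℝ) else 2)
    else if i.val + 1 = j.val ∨ j.val + 1 = i.val then -1 else 0

/-- The diagonal potential matrix: vertex `i` of `Fin (2k+1)` represents the integer `i - k`. -/
noncomputable def potMat (k : ℕ) (α : ℤ → ℝ) : Matrix (Fin (2*k+1)) (Fin (2*k+1)) ℝ :=
  Matrix.diagonal fun i => α ((i : ℤ) - k)

/-- The discrete Schrödinger operator `H_{k,α} = L_k + Σ_j α_j δ_j` on the path `{-k,…,k}`. -/
noncomputable def Hmat (k : ℕ) (α : ℤ → ℝ) : Matrix (Fin (2*k+1)) (Fin (2*k+1)) ℝ :=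
  pathLap (2*k+1) + potMat k α

/-- The set of eigenvalues of a real matrix. -/
def evs {n : ℕ} (M : Matrix (Fin n) (Fin n) ℝ) : Set ℝ :=
  {μ | ∃ f : Fin n → ℝ, f ≠ 0 ∧ M.mulVec f = μ • f}

/-- Lowest eigenvalue. -/
noncomputable def lam0 {n : ℕ} (M : Matrix (Fin n) (Fin n) ℝ) : ℝ := sInf (evs M)

/-- Second-lowest eigenvalue (lowest eigenvalue above the ground state energy). -/
noncomputable def lam1 {n : ℕ} (M : Matrix (Fin n) (Fin n) ℝ) : ℝ :=
  sInf (evs M \ {lam0 M})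

/-- Spectral gap. -/
noncomputable def gap {n : ℕ} (M : Matrix (Fin n) (Fin n) ℝ) : ℝ := lam1 M - lam0 M

/-- `λ_0(V_m, ∞δ_0) = 2 - 2cos(π/(2m+1))`, the Dirichlet ground state energy. -/
noncomputable def dirEVZ (m : ℤ) : ℝ := 2 - 2 * Real.cos (Real.pi / (2 * m + 1))

/-- Index of the integer vertex `j ∈ {-k,…,k}` inside `Fin (2k+1)`. -/
def idx (k : ℕ) (j : ℤ) : Fin (2*k+1) := ⟨(j + k).toNat % (2*k+1), Nat.mod_lt _ (by omega)⟩

/-- `φ` is the normalized strictly positive ground state of `H_{k,α}`. -/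
noncomputable def isGS (k : ℕ) (α : ℤ → ℝ) (φ : Fin (2*k+1) → ℝ) : Prop :=
  (Hmat k α).mulVec φ = lam0 (Hmat k α) • φ ∧ (∑ i, φ i ^ 2 = 1) ∧ ∀ i, 0 < φ i

/-- The single-site potential `α δ_0`. -/
noncomputable def single0 (α : ℝ) : ℤ → ℝ := fun j => if j = 0 then α else 0

/-!
Since `φ` is a normalized eigenvector, `λ₀ = ⟪φ, H φ⟫`; dropping the nonnegative potential leaves
the edge energy `∑ (φ (j+1) - φ j)²` of the box. On `[-k, r_min]` the function `φ - φ(r_min)`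
vanishes at the right end, so the discrete Poincaré inequality with constant `λ₀(V_m, ∞δ₀)` bounds
its mass by the edge energy of that segment; likewise on `[r_max, k]`, and the two segments share
no edge. The Poincaré inequality itself comes from a ground state substitution with the explicit
Dirichlet eigenvector `cos ((2i+1)θ/2)`, `θ = π/(2m+1)`.
-/

theorem pathLap_mulVec_apply {n : ℕ} {f : Fin n → ℝ} {F : ℕ → ℝ}
    (hF : ∀ i (hi : i < n), F i = f ⟨i, hi⟩) (hn : 2 ≤ n) (j : Fin n) :
    (pathLap n *ᵥ f) j = (if 0 < (j : ℕ) then F j - F (j - 1) else 0) +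
      (if (j : ℕ) + 1 < n then F j - F (j + 1) else 0) := by
  have hrow : (pathLap n *ᵥ f) j = ∑ i ∈ range n,
      (if i = (j : ℕ) then (if (j : ℕ) = 0 ∨ (j : ℕ) = n - 1 then (1 : ℝ) else 2)
        else if (j : ℕ) + 1 = i ∨ i + 1 = j then -1 else 0) * F i := by
    refine (Finset.sum_congr rfl fun i _ => ?_).trans (Fin.sum_univ_eq_sum_range _ n)
    simp [pathLap, hF, Fin.ext_iff, eq_comm]
  -- the diagonal entry is the degree `[0 < j] + [j + 1 < n]` only because `2 ≤ n`
  have hentry : ∀ i ∈ range n,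
      (if i = (j : ℕ) then (if (j : ℕ) = 0 ∨ (j : ℕ) = n - 1 then (1 : ℝ) else 2)
        else if (j : ℕ) + 1 = i ∨ i + 1 = j then -1 else 0) * F i =
      (if i = j then ((if 0 < (j : ℕ) then 1 else 0) + (if (j : ℕ) + 1 < n then 1 else 0)) * F j
        else 0) - (if i = j + 1 then F i else 0) - (if 0 < (j : ℕ) then
        (if i = j - 1 then F i else 0) else 0) := by
    intro i hi
    have := j.isLt
    simp only [mem_range] at hi
    split_ifs <;> first | omega | (subst_vars; ring)
  rw [hrow, Finset.sum_congr rfl hentry]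
  have := j.isLt
  simp only [Finset.sum_sub_distrib, Finset.sum_ite_eq', Finset.sum_ite_irrel, Finset.mem_range,
    Finset.sum_const_zero]
  split_ifs <;> first | omega | ring

theorem dotProduct_pathLap_mulVec {n : ℕ} {f g : Fin n → ℝ} {F G : ℕ → ℝ}
    (hF : ∀ i (hi : i < n), F i = f ⟨i, hi⟩) (hG : ∀ i (hi : i < n), G i = g ⟨i, hi⟩)
    (hn : 2 ≤ n) :
    g ⬝ᵥ (pathLap n *ᵥ f) = ∑ i ∈ range (n - 1), (G (i + 1) - G i) * (F (i + 1) - F i) := by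
  obtain ⟨m, rfl⟩ : ∃ m, n = m + 1 := ⟨n - 1, by omega⟩
  have hsum : g ⬝ᵥ (pathLap (m + 1) *ᵥ f) = ∑ j ∈ range (m + 1),
      (G j * (if 0 < j then F j - F (j - 1) else 0) +
        G j * (if j + 1 < m + 1 then F j - F (j + 1) else 0)) := by
    refine (Finset.sum_congr rfl fun j _ => ?_).trans (Fin.sum_univ_eq_sum_range _ (m + 1))
    rw [pathLap_mulVec_apply hF hn, hG j j.isLt, mul_add]
  rw [hsum, Finset.sum_add_distrib, Finset.sum_range_succ', Finset.sum_range_succ,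
    Nat.add_sub_cancel]
  simp only [lt_irrefl, if_false, mul_zero, add_zero, Nat.succ_pos, if_true, Nat.add_sub_cancel,
    ← Finset.sum_add_distrib]
  refine Finset.sum_congr rfl fun i hi => ?_
  rw [if_pos (by simpa using hi)]
  ring

theorem sum_pathLap_mulVec {n : ℕ} (hn : 2 ≤ n) (f : Fin n → ℝ) :
    ∑ j, (pathLap n *ᵥ f) j = 0 := by
  rw [← one_dotProduct, dotProduct_pathLap_mulVec (F := fun i => if h : i < n then f ⟨i, h⟩ else 0)
    (G := fun _ => 1) (by simp +contextual) (by simp) hn]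
  simp

theorem idx_natCast_sub {k i : ℕ} (hi : i < 2 * k + 1) : idx k ((i : ℤ) - k) = ⟨i, hi⟩ := by
  ext
  simp [idx, Nat.mod_eq_of_lt hi]

theorem dotProduct_pathLap_mulVec_self {k : ℕ} (hk : 0 < k) (f : Fin (2 * k + 1) → ℝ) :
    f ⬝ᵥ (pathLap (2 * k + 1) *ᵥ f) =
      ∑ j ∈ Ico (-(k : ℤ)) k, (f (idx k (j + 1)) - f (idx k j)) ^ 2 := by
  have hF : ∀ i (hi : i < 2 * k + 1), f (idx k ((i : ℤ) - k)) = f ⟨i, hi⟩ := fun i hi => by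
    rw [idx_natCast_sub hi]
  rw [dotProduct_pathLap_mulVec hF hF (by omega), Int.Ico_eq_finset_map, Finset.sum_map,
    show ((k : ℤ) - -k).toNat = 2 * k + 1 - 1 by omega]
  refine Finset.sum_congr rfl fun i _ => ?_
  simp only [Function.Embedding.trans_apply, Nat.castEmbedding_apply, addLeftEmbedding_apply]
  push_cast
  ring_nf

-- At `i = 0` the truncated `0 - 1 = 0` turns `hsuper` into the free-end condition
-- `μ * w 0 ≤ w 0 - w 1`.
theorem mul_sum_sq_le_sum_sq_sub_of_supersolution {m : ℕ} {μ : ℝ} {w ψ : ℕ → ℝ}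
    (hw : ∀ i < m, 0 < w i) (hwm : 0 ≤ w m)
    (hsuper : ∀ i < m, μ * w i ≤ 2 * w i - w (i - 1) - w (i + 1)) (hψ : ψ m = 0) :
    μ * ∑ i ∈ range m, ψ i ^ 2 ≤ ∑ i ∈ range m, (ψ (i + 1) - ψ i) ^ 2 := by
  -- the part of the edge `(i - 1, i)` charged to `ψ i ^ 2`; it vanishes at `i = 0`
  -- (again `0 - 1 = 0`) and at `i = m`
  set h : ℕ → ℝ := fun i => (1 - w (i - 1) / w i) * ψ i ^ 2 with hh
  have hedge : ∀ i < m, (1 - w (i + 1) / w i) * ψ i ^ 2 + h (i + 1) ≤ (ψ (i + 1) - ψ i) ^ 2 := by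
    intro i hi
    have hwi := hw i hi
    rcases lt_or_eq_of_le (Nat.succ_le_of_lt hi) with hi' | rfl
    · have hwi' := hw (i + 1) hi'
      have picone : (ψ (i + 1) - ψ i) ^ 2 - ((1 - w (i + 1) / w i) * ψ i ^ 2 + h (i + 1)) =
          (w i * ψ (i + 1) - w (i + 1) * ψ i) ^ 2 / (w i * w (i + 1)) := by
        simp only [hh, Nat.add_sub_cancel]
        field_simp
        ring
      have : 0 ≤ (w i * ψ (i + 1) - w (i + 1) * ψ i) ^ 2 / (w i * w (i + 1)) := by positivity
      linarith
    · simp only [hh, hψ]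
      have : 0 ≤ w (i + 1) / w i * ψ i ^ 2 := by positivity
      nlinarith
  have hshift : ∑ i ∈ range m, h (i + 1) = ∑ i ∈ range m, h i := by
    have hhm : h m = 0 := by simp [hh, hψ]
    have hh0 : h 0 = 0 := by
      rcases Nat.eq_zero_or_pos m with rfl | hm
      · exact hhm
      · simp [hh, (hw 0 hm).ne']
    have := (Finset.sum_range_succ' h m).symm.trans (Finset.sum_range_succ h m)
    rwa [hh0, hhm, add_zero, add_zero] at this
  calc μ * ∑ i ∈ range m, ψ i ^ 2
      ≤ ∑ i ∈ range m, ((1 - w (i + 1) / w i) * ψ i ^ 2 + h i) := by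
        rw [Finset.mul_sum]
        refine Finset.sum_le_sum fun i hi => ?_
        rw [Finset.mem_range] at hi
        have hwi := hw i hi
        have hcoef : μ ≤ (1 - w (i + 1) / w i) + (1 - w (i - 1) / w i) := by
          have : (1 - w (i + 1) / w i) + (1 - w (i - 1) / w i) =
              (2 * w i - w (i - 1) - w (i + 1)) / w i := by
            field_simp
            ring
          rw [this, le_div_iff₀ hwi]
          exact hsuper i hi
        rw [hh, ← add_mul]
        exact mul_le_mul_of_nonneg_right hcoef (sq_nonneg _)
    _ = ∑ i ∈ range m, ((1 - w (i + 1) / w i) * ψ i ^ 2 + h (i + 1)) := by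
        rw [Finset.sum_add_distrib, Finset.sum_add_distrib, hshift]
    _ ≤ ∑ i ∈ range m, (ψ (i + 1) - ψ i) ^ 2 :=
        Finset.sum_le_sum fun i hi => hedge i (Finset.mem_range.mp hi)

theorem dirEVZ_mul_sum_sq_le {m : ℕ} {ψ : ℕ → ℝ} (hψ : ψ m = 0) :
    dirEVZ m * ∑ i ∈ range m, ψ i ^ 2 ≤ ∑ i ∈ range m, (ψ (i + 1) - ψ i) ^ 2 := by
  set θ : ℝ := Real.pi / (2 * m + 1) with hθ
  have hθpos : 0 < θ := by positivity
  have hθm : (2 * m + 1) * θ = Real.pi := by rw [hθ]; field_simp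
  have hdir : dirEVZ m = 2 - 2 * Real.cos θ := by simp [dirEVZ, hθ]
  -- the Dirichlet ground state `cos ((2i+1)θ/2)`; at `i = 0` the truncated `0 - 1 = 0`
  -- matches its even reflection `cos (-θ/2) = cos (θ/2)`
  set w : ℕ → ℝ := fun i => Real.cos ((2 * i + 1) * θ / 2) with hw
  have hwpos : ∀ i < m, 0 < w i := by
    intro i hi
    have : (i : ℝ) + 1 ≤ m := by exact_mod_cast hi
    apply Real.cos_pos_of_mem_Ioo
    constructor <;> nlinarith [Real.pi_pos]
  have hwm : w m = 0 := by
    simp only [hw]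
    rw [show (2 * (m : ℝ) + 1) * θ / 2 = Real.pi / 2 by linarith, Real.cos_pi_div_two]
  have heq : ∀ i, dirEVZ m * w i = 2 * w i - w (i - 1) - w (i + 1) := by
    intro i
    have hprev : w (i - 1) = Real.cos ((2 * i - 1) * θ / 2) := by
      rcases Nat.eq_zero_or_pos i with rfl | hi
      · simp only [hw]
        rw [← Real.cos_neg]
        congr 1
        norm_num
        ring
      · simp only [hw, Nat.cast_sub hi]
        ring_nf
    have := Real.cos_add_cos ((2 * i - 1) * θ / 2) ((2 * (i + 1 : ℕ) + 1) * θ / 2)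
    rw [show ((2 * i - 1) * θ / 2 + (2 * (i + 1 : ℕ) + 1) * θ / 2) / 2 = (2 * i + 1) * θ / 2 by
        push_cast; ring,
      show ((2 * i - 1) * θ / 2 - (2 * (i + 1 : ℕ) + 1) * θ / 2) / 2 = -θ by push_cast; ring,
      Real.cos_neg] at this
    rw [hprev, hdir]
    simp only [hw]
    linear_combination this
  exact mul_sum_sq_le_sum_sq_sub_of_supersolution hwpos hwm.ge (fun i _ => (heq i).le) hψ

theorem dirEVZ_mul_sum_Icc_sub_right_le (Φ : ℤ → ℝ) (a b : ℤ) :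
    dirEVZ (b - a) * ∑ j ∈ Icc a b, (Φ j - Φ b) ^ 2 ≤ ∑ j ∈ Ico a b, (Φ (j + 1) - Φ j) ^ 2 := by
  rcases lt_or_ge b a with hba | hab
  · simp [Finset.Icc_eq_empty_of_lt hba, Finset.Ico_eq_empty_of_le hba.le]
  obtain ⟨m, rfl⟩ : ∃ m : ℕ, b = a + m := ⟨(b - a).toNat, by omega⟩
  have key := dirEVZ_mul_sum_sq_le (ψ := fun i => Φ (a + i) - Φ (a + m)) (m := m) (by simp)
  rw [Int.Icc_eq_finset_map, Int.Ico_eq_finset_map, Finset.sum_map, Finset.sum_map,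
    show (a + m + 1 - a).toNat = m + 1 by omega, show (a + m - a).toNat = m by omega,
    Finset.sum_range_succ]
  simpa [add_assoc] using key

theorem dirEVZ_mul_sum_Icc_sub_left_le (Φ : ℤ → ℝ) (a b : ℤ) :
    dirEVZ (b - a) * ∑ j ∈ Icc a b, (Φ j - Φ a) ^ 2 ≤ ∑ j ∈ Ico a b, (Φ (j + 1) - Φ j) ^ 2 := by
  have hmass : ∑ j ∈ Icc a b, (Φ j - Φ a) ^ 2 =
      ∑ j ∈ Icc a b, (Φ (a + b - j) - Φ (a + b - b)) ^ 2 :=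
    Finset.sum_nbij' (fun j => a + b - j) (fun j => a + b - j) (by simp; omega) (by simp; omega)
      (by simp) (by simp) (by simp)
  have hedges : ∑ j ∈ Ico a b, (Φ (j + 1) - Φ j) ^ 2 =
      ∑ j ∈ Ico a b, (Φ (a + b - (j + 1)) - Φ (a + b - j)) ^ 2 :=
    Finset.sum_nbij' (fun j => a + b - 1 - j) (fun j => a + b - 1 - j) (by simp; omega)
      (by simp; omega) (by simp) (by simp) (fun j _ => by ring_nf)
  rw [hmass, hedges]
  exact dirEVZ_mul_sum_Icc_sub_right_le (fun j => Φ (a + b - j)) a b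

theorem eq_of_sum_Ico_sq_sub_le_zero {Φ : ℤ → ℝ} {a b : ℤ}
    (h : ∑ j ∈ Ico a b, (Φ (j + 1) - Φ j) ^ 2 ≤ 0) : ∀ j ∈ Icc a b, Φ j = Φ a := by
  have hstep : ∀ j ∈ Ico a b, Φ (j + 1) = Φ j := fun j hj =>
    sub_eq_zero.mp (pow_eq_zero_iff two_ne_zero |>.mp
      ((Finset.sum_eq_zero_iff_of_nonneg fun _ _ => sq_nonneg _).mp
        (h.antisymm (Finset.sum_nonneg fun _ _ => sq_nonneg _)) j hj))
  intro j hj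
  obtain ⟨haj, hjb⟩ := Finset.mem_Icc.mp hj
  induction j, haj using Int.leInduction with
  | base => rfl
  | succ j haj ih =>
    rw [hstep j (Finset.mem_Ico.mpr ⟨haj, by omega⟩), ih (by simp; omega) (by omega)]

namespace isGS

variable {k : ℕ} {α : ℤ → ℝ} {φ : Fin (2 * k + 1) → ℝ}

theorem dotProduct_Hmat_mulVec (hφ : isGS k α φ) :
    φ ⬝ᵥ (Hmat k α *ᵥ φ) = lam0 (Hmat k α) := by
  rw [hφ.1, dotProduct_smul, smul_eq_mul]
  simp [dotProduct, ← sq, hφ.2.1]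

theorem sum_Ico_sq_sub_le_lam0 (hφ : isGS k α φ) (hk : 0 < k)
    (hα : ∀ i : Fin (2 * k + 1), 0 ≤ α ((i : ℤ) - k)) :
    ∑ j ∈ Ico (-(k : ℤ)) k, (φ (idx k (j + 1)) - φ (idx k j)) ^ 2 ≤ lam0 (Hmat k α) := by
  have hpot : 0 ≤ φ ⬝ᵥ (potMat k α *ᵥ φ) := by
    simp only [potMat, dotProduct, mulVec_diagonal]
    exact Finset.sum_nonneg fun i _ => by nlinarith [hα i, sq_nonneg (φ i)]
  rw [← hφ.dotProduct_Hmat_mulVec, Hmat, add_mulVec, dotProduct_add,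
    dotProduct_pathLap_mulVec_self hk]
  exact le_add_of_nonneg_right hpot

theorem lam0_eq_zero (hφ : isGS k α φ) (hk : 0 < k)
    (hα : ∀ i : Fin (2 * k + 1), α ((i : ℤ) - k) = 0) : lam0 (Hmat k α) = 0 := by
  have hpot : potMat k α = 0 := by
    rw [potMat, ← diagonal_zero]
    exact congrArg diagonal (funext hα)
  have hsum : lam0 (Hmat k α) * ∑ i, φ i = 0 := by
    rw [Finset.mul_sum, ← sum_pathLap_mulVec (by omega) φ]
    refine Finset.sum_congr rfl fun i _ => ?_
    rw [← smul_eq_mul, ← Pi.smul_apply, ← hφ.1, Hmat, hpot, add_zero]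
  exact (mul_eq_zero.mp hsum).resolve_right
    (Finset.sum_pos (fun i _ => hφ.2.2 i) Finset.univ_nonempty).ne'

theorem apply_idx_eq_of_potential_eq_zero (hφ : isGS k α φ) (hk : 0 < k)
    (hα : ∀ i : Fin (2 * k + 1), α ((i : ℤ) - k) = 0) (i j : ℤ) :
    φ (idx k i) = φ (idx k j) := by
  have hconst := eq_of_sum_Ico_sq_sub_le_zero (Φ := fun j => φ (idx k j))
    ((hφ.sum_Ico_sq_sub_le_lam0 hk fun i => (hα i).ge).trans (hφ.lam0_eq_zero hk hα).le)
  have hidx : ∀ i, φ (idx k i) = φ (idx k (-k)) := fun i => by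
    have hi := (idx k i).isLt
    rw [← hconst ((idx k i : ℕ) - k) (Finset.mem_Icc.mpr ⟨by omega, by omega⟩),
      idx_natCast_sub hi]
  rw [hidx i, hidx j]

end isGS

/-- lower bound for the ground state energy, Theorem 3.1: for all
`k > max{|r_min|, |r_max|}/2`,
`λ_0(V_k, α) ≥ (1/2 - a_{k,1}) λ_0(V_{k+r_min}, ∞δ_0) + (1/2 - a_{k,2}) λ_0(V_{k-r_max}, ∞δ_0)`,
where `a_{k,1} = 1/2 - Σ_{j=-k}^{r_min} |φ_k(j) - φ_k(r_min)|²` and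
`a_{k,2} = 1/2 - Σ_{j=r_max}^{k} |φ_k(j) - φ_k(r_max)|²`. -/
theorem stmt12 (α : ℤ → ℝ) (J : Finset ℤ) (hne : J.Nonempty)
    (hsupp : ∀ j : ℤ, α j ≠ 0 ↔ j ∈ J) (hpos : ∀ j ∈ J, 0 < α j)
    (rmin rmax : ℤ) (hrmin : rmin = J.min' hne) (hrmax : rmax = J.max' hne)
    (k : ℕ) (hk : max |rmin| |rmax| < 2 * (k : ℤ))
    (φ : Fin (2*k+1) → ℝ) (hφ : isGS k α φ) :
    (1/2 - (1/2 - ∑ j ∈ Finset.Icc (-(k : ℤ)) rmin, (φ (idx k j) - φ (idx k rmin)) ^ 2)) *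
        dirEVZ ((k : ℤ) + rmin) +
      (1/2 - (1/2 - ∑ j ∈ Finset.Icc rmax (k : ℤ), (φ (idx k j) - φ (idx k rmax)) ^ 2)) *
        dirEVZ ((k : ℤ) - rmax) ≤ lam0 (Hmat k α) := by
  have hk0 : 0 < k := by
    have := (abs_nonneg rmin).trans_lt ((le_max_left _ _).trans_lt hk)
    omega
  have hJ : ∀ j, α j ≠ 0 → rmin ≤ j ∧ j ≤ rmax := fun j hj =>
    ⟨hrmin ▸ J.min'_le j ((hsupp j).mp hj), hrmax ▸ J.le_max' j ((hsupp j).mp hj)⟩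
  have hα : ∀ j, 0 ≤ α j := fun j =>
    (eq_or_ne (α j) 0).elim (·.ge) fun hj => (hpos j ((hsupp j).mp hj)).le
  set e : ℤ → ℝ := fun j => (φ (idx k (j + 1)) - φ (idx k j)) ^ 2
  by_cases hbox : rmin ≤ k ∧ -(k : ℤ) ≤ rmax
  · have hle : rmin ≤ rmax := hrmin ▸ hrmax ▸ J.min'_le _ (J.max'_mem hne)
    calc _ = dirEVZ (rmin - -k) * ∑ j ∈ Icc (-(k : ℤ)) rmin, (φ (idx k j) - φ (idx k rmin)) ^ 2 +
          dirEVZ (k - rmax) * ∑ j ∈ Icc rmax (k : ℤ), (φ (idx k j) - φ (idx k rmax)) ^ 2 := by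
          rw [sub_neg_eq_add, add_comm rmin]
          ring
      _ ≤ ∑ j ∈ Ico (-(k : ℤ)) rmin, e j + ∑ j ∈ Ico rmax (k : ℤ), e j :=
          add_le_add (dirEVZ_mul_sum_Icc_sub_right_le _ _ _) (dirEVZ_mul_sum_Icc_sub_left_le _ _ _)
      _ = ∑ j ∈ Ico (-(k : ℤ)) rmin ∪ Ico rmax k, e j :=
          (Finset.sum_union (Finset.Ico_disjoint_Ico_consecutive _ _ _ |>.mono_right
            (Finset.Ico_subset_Ico_left hle))).symm
      _ ≤ ∑ j ∈ Ico (-(k : ℤ)) k, e j :=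
          Finset.sum_le_sum_of_subset_of_nonneg
            (Finset.union_subset (Finset.Ico_subset_Ico_right hbox.1)
              (Finset.Ico_subset_Ico_left hbox.2))
            fun _ _ _ => sq_nonneg _
      _ ≤ lam0 (Hmat k α) := hφ.sum_Ico_sq_sub_le_lam0 hk0 fun _ => hα _
  -- `J` misses the box, so `φ` is constant; this case is needed because `idx` wraps around
  -- and the sums over `Icc` then leave the box
  · have hvanish : ∀ i : Fin (2 * k + 1), α ((i : ℤ) - k) = 0 := fun i => by
      by_contra hi
      have := hJ _ hi
      have := i.isLt
      omega
    have hflat : ∀ i j, (φ (idx k i) - φ (idx k j)) ^ 2 = 0 := fun i j => by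
      rw [hφ.apply_idx_eq_of_potential_eq_zero hk0 hvanish i j, sub_self, sq, mul_zero]
    simp only [hflat, Finset.sum_const_zero, sub_zero, sub_self, zero_mul, add_zero]
    exact (hφ.lam0_eq_zero hk0 hvanish).ge
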